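/- arXiv:1904.04771 — 6 statements merged into one kernel-verified Lean document; each statement's English description precedes it below -/
import Mathlib

section
/- Let a, b > 0 and 0 < d < g, and let B > 0. Define the matrices Q = [[-a, a], [b, -b]] and R = diag(-d, g-d), and set Δ = (ag - ad - bd)/(a+b), with Δ ≠ 0. Suppose F = (F₁, F₂) : [0, B] → ℝ² is differentiable and satisfies the ODE F'(x) = R⁻¹ Qᵀ F(x) for all x ∈ [0, B], together with the boundary conditions F₂(0) = 0 and F₁(B) = b/(a+b). Then F₁(0) + F₂(0) = F₁(0) = (-Δ/d) / (1 - (a(g-d)/(bd)) · exp((a+b)Δ B / ((g-d)d))). -/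
/-! Along a left eigenvector `v` of `M = R⁻¹Qᵀ` with eigenvalue `μ`, the scalar `v ⬝ᵥ F x` solves
`y' = μ y`, so it grows like `exp (μ x)`. Since the rows of `Q` sum to zero, `1ᵀR = (-d, g - d)` is a
left null vector of `M` (conservation of flux), and `(a, -b)` is a left eigenvector with eigenvalue
`a / d - b / (g - d) = (a + b) Δ / ((g - d) d)`. Comparing both quantities at `0` and at `B` and using
the boundary conditions gives two linear equations in `F₁(0)` and `F₂(B)`; eliminating `F₂(B)` leaves
`F₁(0) (a (g - d) E - b d) = b Δ` with `E = exp ((a + b) Δ B / ((g - d) d))`, and `Δ ≠ 0` rules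
out a vanishing coefficient. -/

open Matrix Set

theorem HasDerivAt.const_dotProduct {ι : Type*} [Fintype ι] {F : ℝ → ι → ℝ} {F' : ι → ℝ}
    {x : ℝ} (hF : HasDerivAt F F' x) (v : ι → ℝ) :
    HasDerivAt (fun y => v ⬝ᵥ F y) (v ⬝ᵥ F') x := by
  simpa only [dotProduct] using
    HasDerivAt.fun_sum fun i _ => (hasDerivAt_pi.1 hF i).const_mul (v i)

theorem dotProduct_eq_exp_mul_of_vecMul_eq_smul {ι : Type*} [Fintype ι]
    {M : Matrix ι ι ℝ} {v : ι → ℝ} {μ : ℝ} (hv : v ᵥ* M = μ • v)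
    {F : ℝ → ι → ℝ} {s t : ℝ} (hst : s ≤ t)
    (hF : ∀ x ∈ Icc s t, HasDerivAt F (M *ᵥ F x) x) :
    v ⬝ᵥ F t = Real.exp (μ * (t - s)) * v ⬝ᵥ F s := by
  set φ : ℝ → ℝ := fun y => Real.exp (-(μ * (y - s))) * v ⬝ᵥ F y
  have hφ : ∀ x ∈ Icc s t, HasDerivAt φ 0 x := by
    intro x hx
    have hexp : HasDerivAt (fun y => Real.exp (-(μ * (y - s))))
        (Real.exp (-(μ * (x - s))) * -μ) x := by
      simpa using (((hasDerivAt_id x).sub_const s).const_mul μ).neg.exp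
    refine (hexp.mul ((hF x hx).const_dotProduct v)).congr_deriv ?_
    rw [dotProduct_mulVec, hv, smul_dotProduct, smul_eq_mul]
    ring
  have hconst : φ t = φ s :=
    constant_of_has_deriv_right_zero (fun x hx => (hφ x hx).continuousAt.continuousWithinAt)
      (fun x hx => (hφ x (Ico_subset_Icc_self hx)).hasDerivWithinAt) t (right_mem_Icc.2 hst)
  simp only [φ, sub_self, mul_zero, neg_zero, Real.exp_zero, one_mul] at hconst
  rw [← hconst, ← mul_assoc, ← Real.exp_add, add_neg_cancel, Real.exp_zero, one_mul]

theorem dotProduct_eq_of_vecMul_eq_zero {ι : Type*} [Fintype ι]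
    {M : Matrix ι ι ℝ} {v : ι → ℝ} (hv : v ᵥ* M = 0)
    {F : ℝ → ι → ℝ} {s t : ℝ} (hst : s ≤ t)
    (hF : ∀ x ∈ Icc s t, HasDerivAt F (M *ᵥ F x) x) :
    v ⬝ᵥ F t = v ⬝ᵥ F s := by
  simpa using dotProduct_eq_exp_mul_of_vecMul_eq_smul (μ := 0) (by rw [hv, zero_smul]) hst hF

theorem Matrix.vecMul_inv_mul_transpose_eq_zero {ι R : Type*} [Fintype ι] [DecidableEq ι]
    [CommRing R] {D Q : Matrix ι ι R} (hD : IsUnit D.det) (hQ : Q *ᵥ 1 = 0) :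
    (1 ᵥ* D) ᵥ* (D⁻¹ * Qᵀ) = 0 := by
  rw [vecMul_vecMul, ← Matrix.mul_assoc, mul_nonsing_inv D hD, Matrix.one_mul,
    vecMul_transpose, hQ]

theorem vecMul_inv_mul_transpose_twoState_eq_zero (a b r₁ r₂ : ℝ) (h₁ : r₁ ≠ 0)
    (h₂ : r₂ ≠ 0) : ![r₁, r₂] ᵥ* ((!![r₁, 0; 0, r₂])⁻¹ * (!![-a, a; b, -b])ᵀ) = 0 := by
  have hD : IsUnit (!![r₁, 0; 0, r₂]).det := by simp [det_fin_two, h₁, h₂]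
  have hQ : !![-a, a; b, -b] *ᵥ 1 = 0 := by
    ext i; fin_cases i <;> simp [mulVec, dotProduct, Fin.sum_univ_two]
  have hrates : 1 ᵥ* !![r₁, 0; 0, r₂] = ![r₁, r₂] := by
    ext i; fin_cases i <;> simp [vecMul, dotProduct, Fin.sum_univ_two]
  rw [← hrates, vecMul_inv_mul_transpose_eq_zero hD hQ]

theorem vecMul_inv_mul_transpose_twoState_eq_smul (a b r₁ r₂ : ℝ) (h₁ : r₁ ≠ 0) (h₂ : r₂ ≠ 0) :
    ![a, -b] ᵥ* ((!![r₁, 0; 0, r₂])⁻¹ * (!![-a, a; b, -b])ᵀ)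
      = (-(a / r₁ + b / r₂)) • ![a, -b] := by
  have hinv : (!![r₁, 0; 0, r₂])⁻¹ = !![r₁⁻¹, 0; 0, r₂⁻¹] :=
    inv_eq_left_inv (by simp [h₁, h₂, one_fin_two])
  rw [hinv]
  ext i
  fin_cases i <;> simp [vecMul, dotProduct, Fin.sum_univ_two] <;> ring

/-- Two-state Markov modulated fluid queue: closed-form LOLP.
State `0` is the discharge state (rate `-d`, transition rate `a` out of it),
state `1` is the charge state (rate `g - d`, transition rate `b` out of it).
`F x i` is the stationary probability that the battery content is at most `x`
and the background chain is in state `i`.  The LOLP is `F 0 0 + F 0 1`. -/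
theorem two_state_LOLP_closed_form
    (a b d g B : ℝ) (ha : 0 < a) (hb : 0 < b) (hd : 0 < d) (hdg : d < g)
    (hB : 0 < B)
    (Q R : Matrix (Fin 2) (Fin 2) ℝ)
    (hQ : Q = !![-a, a; b, -b])
    (hR : R = !![-d, 0; 0, g - d])
    (Δ : ℝ) (hΔdef : Δ = (a * g - a * d - b * d) / (a + b)) (hΔ : Δ ≠ 0)
    (F : ℝ → Fin 2 → ℝ)
    (hODE : ∀ x ∈ Set.Icc (0 : ℝ) B, HasDerivAt F ((R⁻¹ * Qᵀ) *ᵥ F x) x)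
    (hbc0 : F 0 1 = 0) (hbcB : F B 0 = b / (a + b)) :
    F 0 0 + F 0 1 = F 0 0 ∧
      F 0 0 = (-Δ / d) /
        (1 - (a * (g - d) / (b * d)) *
          Real.exp ((a + b) * Δ * B / ((g - d) * d))) := by
  subst hQ hR
  have hnd : -d ≠ 0 := neg_ne_zero.2 hd.ne'
  have hgd : g - d ≠ 0 := (sub_pos.2 hdg).ne'
  have hab : a + b ≠ 0 := (add_pos ha hb).ne'
  have hflux := dotProduct_eq_of_vecMul_eq_zero
    (vecMul_inv_mul_transpose_twoState_eq_zero a b (-d) (g - d) hnd hgd) hB.le hODE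
  have heigen := dotProduct_eq_exp_mul_of_vecMul_eq_smul
    (vecMul_inv_mul_transpose_twoState_eq_smul a b (-d) (g - d) hnd hgd) hB.le hODE
  have hrate : -(a / -d + b / (g - d)) * (B - 0) = (a + b) * Δ * B / ((g - d) * d) := by
    rw [hΔdef]; field_simp; ring
  rw [hrate] at heigen
  set E := Real.exp ((a + b) * Δ * B / ((g - d) * d))
  simp only [vec2_dotProduct, cons_val_zero, cons_val_one, hbc0, hbcB] at hflux heigen
  have key : F 0 0 * (a * (g - d) * E - b * d) = b * Δ := by
    linear_combination -(b * hflux) - (g - d) * heigen - b * hΔdef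
  have hden : 1 - a * (g - d) / (b * d) * E ≠ 0 := by
    intro h
    field_simp at h
    exact mul_ne_zero hb.ne' hΔ (by linear_combination -key - F 0 0 * h)
  refine ⟨by rw [hbc0, add_zero], ?_⟩
  rw [eq_div_iff hden]
  field_simp
  linear_combination -key
end

section
/- Fix B > 0 and a continuous function r : [0,∞) → ℝ satisfying r(s) ≥ r̲ for all s, where r̲ < 0. Let b : [0,∞) → [0,B] be a regulated battery trajectory driven by r, and suppose (1/t)∫₀ᵗ r(s) ds → Δ as t → ∞ with Δ < 0. Then liminf_{t→∞} (1/t)·Leb({s ∈ [0,t] : b(s) = 0 and r(s) < 0}) ≥ (-Δ)/(-r̲), where Leb denotes Lebesgue measure. That is, the long-run fraction of time during which load is lost is at least (-Δ)/(-r̲). -/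
/-!
Let `Z = {b = 0 ∧ r < 0}` be the loss-of-load set. On `Z` the battery is frozen, so
`b' = 0 ≤ r - r̲`; off `Z` either `b' = r` or `b' = 0 < r`. Hence `b' ≤ r - r̲ · 1_Z`, and
integrating over `[0, t]` gives `-B ≤ b t - b 0 ≤ ∫₀ᵗ r - r̲ · |Z ∩ [0, t]|`. Dividing by
`r̲ t < 0` bounds the loss fraction below by `(t⁻¹ ∫₀ᵗ r + B / t) / r̲ → Δ / r̲`.
-/

open MeasureTheory intervalIntegral Filter Set Topology

lemma toReal_volume_sep_Icc_zero_le {p : ℝ → Prop} {t : ℝ} (ht : 0 ≤ t) :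
    (volume {s : ℝ | s ∈ Icc 0 t ∧ p s}).toReal ≤ t := by
  have hfin : volume (Icc (0 : ℝ) t) ≠ ⊤ := by simp
  calc (volume {s : ℝ | s ∈ Icc 0 t ∧ p s}).toReal
      ≤ (volume (Icc (0 : ℝ) t)).toReal :=
        ENNReal.toReal_mono hfin (measure_mono fun s hs => hs.1)
    _ = t := by simp [ht]

lemma intervalIntegral_indicator_const {Z : Set ℝ} (hZ : MeasurableSet Z) (c : ℝ) {t : ℝ}
    (ht : 0 ≤ t) :
    ∫ s in (0 : ℝ)..t, Z.indicator (fun _ => c) s =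
      c * (volume {s : ℝ | s ∈ Icc 0 t ∧ s ∈ Z}).toReal := by
  rw [integral_of_le ht, ← integral_Icc_eq_integral_Ioc, integral_indicator_const c hZ,
    measureReal_restrict_apply hZ, smul_eq_mul, mul_comm, measureReal_def, inter_comm]
  rfl

section Regulated

variable {B rlo : ℝ} {r b : ℝ → ℝ}

lemma deriv_le_sub_indicator_lossSet {s : ℝ} (hrge : rlo ≤ r s)
    (hderiv0 : ((b s = 0 ∧ r s < 0) ∨ (b s = B ∧ 0 < r s)) → deriv b s = 0)
    (hderivr : ¬((b s = 0 ∧ r s < 0) ∨ (b s = B ∧ 0 < r s)) → deriv b s = r s) :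
    deriv b s ≤ r s - {x | b x = 0 ∧ r x < 0}.indicator (fun _ => rlo) s := by
  by_cases hloss : b s = 0 ∧ r s < 0
  · rw [hderiv0 (Or.inl hloss), indicator_of_mem (show s ∈ {x | b x = 0 ∧ r x < 0} from hloss)]
    linarith
  rw [indicator_of_notMem (show s ∉ {x | b x = 0 ∧ r x < 0} from hloss), sub_zero]
  by_cases hfull : b s = B ∧ 0 < r s
  · rw [hderiv0 (Or.inr hfull)]
    exact hfull.2.le
  · rw [hderivr (by tauto)]

lemma sub_le_integral_sub_mul_measure_lossSet (hr : Continuous r) (hrge : ∀ s, rlo ≤ r s)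
    (hdiff : Differentiable ℝ b)
    (hderiv0 : ∀ t ≥ (0 : ℝ),
      ((b t = 0 ∧ r t < 0) ∨ (b t = B ∧ 0 < r t)) → deriv b t = 0)
    (hderivr : ∀ t ≥ (0 : ℝ),
      ¬((b t = 0 ∧ r t < 0) ∨ (b t = B ∧ 0 < r t)) → deriv b t = r t)
    {t : ℝ} (ht : 0 ≤ t) :
    b t - b 0 ≤ (∫ s in (0 : ℝ)..t, r s) -
      rlo * (volume {s : ℝ | s ∈ Icc 0 t ∧ b s = 0 ∧ r s < 0}).toReal := by
  set Z : Set ℝ := {x | b x = 0 ∧ r x < 0}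
  have hZ : MeasurableSet Z :=
    (hdiff.continuous.measurable (measurableSet_singleton 0)).inter
      (hr.measurable measurableSet_Iio)
  have hind : IntegrableOn (Z.indicator fun _ => rlo) (Icc 0 t) :=
    (integrableOn_const (by simp)).indicator hZ
  -- the one-sided FTC inequality needs no integrability of `deriv b`
  have hle := sub_le_integral_of_hasDeriv_right_of_le ht hdiff.continuous.continuousOn
    (fun x _ => (hdiff x).hasDerivAt.hasDerivWithinAt)
    ((hr.integrableOn_Icc).sub hind)
    (fun x hx => deriv_le_sub_indicator_lossSet (hrge x) (hderiv0 x hx.1.le) (hderivr x hx.1.le))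
  rwa [Pi.sub_def, integral_sub (hr.intervalIntegrable 0 t)
    ((intervalIntegrable_iff_integrableOn_Icc_of_le ht).mpr hind),
    intervalIntegral_indicator_const hZ rlo ht] at hle

end Regulated

lemma div_le_liminf_div_of_mul_le {L I : ℝ → ℝ} {c B Δ : ℝ} (hc : c < 0)
    (hI : Tendsto (fun t => I t / t) atTop (𝓝 Δ))
    (hle : ∀ t ≥ 0, c * L t ≤ I t + B) (hL : ∀ t ≥ 0, L t ≤ t) :
    Δ / c ≤ liminf (fun t => L t / t) atTop := by
  have hlim : Tendsto (fun t => (I t / t + B / t) / c) atTop (𝓝 (Δ / c)) := by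
    simpa using (hI.add (tendsto_const_nhds.div_atTop tendsto_id)).div_const c
  have hlower : ∀ᶠ t in atTop, (I t / t + B / t) / c ≤ L t / t := by
    filter_upwards [eventually_gt_atTop 0] with t ht
    rw [← add_div, div_le_iff_of_neg hc, div_mul_eq_mul_div, mul_comm]
    exact div_le_div_of_nonneg_right (hle t ht.le) ht.le
  have hupper : ∀ᶠ t in atTop, L t / t ≤ 1 := by
    filter_upwards [eventually_gt_atTop 0] with t ht
    exact (div_le_one ht).mpr (hL t ht.le)
  calc Δ / c = liminf (fun t => (I t / t + B / t) / c) atTop := hlim.liminf_eq.symm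
    _ ≤ liminf (fun t => L t / t) atTop :=
      liminf_le_liminf hlower hlim.isBoundedUnder_ge
        (isCoboundedUnder_ge_of_eventually_le _ hupper)

theorem battery_LOLP_lower_bound_general
    (B : ℝ) (r b : ℝ → ℝ) (hr : Continuous r)
    (rlo : ℝ) (hrlo : rlo < 0) (hrge : ∀ s, rlo ≤ r s)
    (hrange : ∀ t ≥ (0 : ℝ), b t ∈ Set.Icc (0 : ℝ) B)
    (hdiff : Differentiable ℝ b)
    (hderiv0 : ∀ t ≥ (0 : ℝ),
      ((b t = 0 ∧ r t < 0) ∨ (b t = B ∧ 0 < r t)) → deriv b t = 0)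
    (hderivr : ∀ t ≥ (0 : ℝ),
      ¬((b t = 0 ∧ r t < 0) ∨ (b t = B ∧ 0 < r t)) → deriv b t = r t)
    (Δ : ℝ)
    (hdrift : Filter.Tendsto (fun t => (∫ s in (0:ℝ)..t, r s) / t)
      Filter.atTop (nhds Δ)) :
    (-Δ) / (-rlo) ≤
      Filter.liminf
        (fun t => (volume {s : ℝ | s ∈ Set.Icc 0 t ∧ b s = 0 ∧ r s < 0}).toReal / t)
        Filter.atTop := by
  rw [neg_div_neg_eq]
  refine div_le_liminf_div_of_mul_le hrlo hdrift (B := B) (fun t ht => ?_)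
    (fun t ht => toReal_volume_sep_Icc_zero_le ht)
  have hbal := sub_le_integral_sub_mul_measure_lossSet hr hrge hdiff hderiv0 hderivr ht
  linarith [(hrange 0 le_rfl).2, (hrange t ht).1]

/-- Negative drift LOLP lower bound (pathwise form): if `r ≥ r̲` with
`r̲ < 0` and the time-average net generation tends to `Δ < 0`, then the
long-run fraction of time during which load is lost is at least
`(-Δ)/(-r̲)`. -/
theorem battery_LOLP_lower_bound
    (B : ℝ) (hB : 0 < B) (r b : ℝ → ℝ) (hr : Continuous r)
    (rlo : ℝ) (hrlo : rlo < 0) (hrge : ∀ s, rlo ≤ r s)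
    (hrange : ∀ t ≥ (0 : ℝ), b t ∈ Set.Icc (0 : ℝ) B)
    (hdiff : Differentiable ℝ b)
    (hderiv0 : ∀ t ≥ (0 : ℝ),
      ((b t = 0 ∧ r t < 0) ∨ (b t = B ∧ 0 < r t)) → deriv b t = 0)
    (hderivr : ∀ t ≥ (0 : ℝ),
      ¬((b t = 0 ∧ r t < 0) ∨ (b t = B ∧ 0 < r t)) → deriv b t = r t)
    (Δ : ℝ) (hΔ : Δ < 0)
    (hdrift : Filter.Tendsto (fun t => (∫ s in (0:ℝ)..t, r s) / t)
      Filter.atTop (nhds Δ)) :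
    (-Δ) / (-rlo) ≤
      Filter.liminf
        (fun t => (volume {s : ℝ | s ∈ Set.Icc 0 t ∧ b s = 0 ∧ r s < 0}).toReal / t)
        Filter.atTop :=
  battery_LOLP_lower_bound_general B r b hr rlo hrlo hrge hrange hdiff hderiv0 hderivr Δ hdrift
end

section
/- Consider the Markov-modulated setup with n ≥ 1, row-stochastic matrix P, initial probability vector π₀, rates r : {1,…,n} → ℝ, and q > 0, with (Z_k) and (Y_k) as specified. Let θ ∈ ℝ satisfy q + θ·r(l) > 0 for every state l. Then for every k ≥ 1, E[exp(θ · Σ_{j=0}^{k-1} (-r(Z_j)) Y_j)] = Σ_{l,m} π₀(l) · (M(θ)^k)_{l,m}, i.e., the moment generating function of U_k equals π₀ᵀ M(θ)^k 𝟙, where 𝟙 is the all-ones vector. -/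
/-!
Split `Ω` according to the path `(Z₀, …, Z_{k-1}) = i`. On that event `θ U_k = Σⱼ -θ r(iⱼ) Yⱼ`,
and the law of `(Y₀, …, Y_{k-1})` restricted to it is `w(i)` times the product of `k` exponential
laws, with `w(i) = π₀(i₀) ∏ P(iⱼ, iⱼ₊₁)`. Hence the path contributes `w(i) ∏ⱼ q / (q + θ r(iⱼ))`,
a product of exponential moment generating functions. Attaching each factor `q / (q + θ r(iⱼ))`
to the row `iⱼ` of `P` turns the sum over paths into `π₀ᵀ M(θ)^{k-1} d` with
`dₗ = q / (q + θ r(l))`, and `d = M(θ) 𝟙` because `P` is stochastic.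
-/

open MeasureTheory ProbabilityTheory
open scoped ENNReal Matrix

namespace Matrix

variable {ι R : Type*} [Fintype ι] [DecidableEq ι] [CommSemiring R]

theorem sum_fin_path_eq_dotProduct_pow_mulVec (A : Matrix ι ι R) (u : ι → R) (m : ℕ)
    (v : ι → R) :
    ∑ p : Fin (m + 1) → ι,
        v (p 0) * (∏ j : Fin m, A (p j.castSucc) (p j.succ)) * u (p (Fin.last m))
      = v ⬝ᵥ (A ^ m *ᵥ u) := by
  induction m generalizing v with
  | zero =>
    rw [← (Equiv.funUnique (Fin 1) ι).symm.sum_comp]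
    simp [dotProduct]
  | succ m ih =>
    rw [← (Fin.consEquiv fun _ => ι).sum_comp, Fintype.sum_prod_type, Finset.sum_comm,
      pow_succ', ← mulVec_mulVec, dotProduct_mulVec, ← ih]
    refine Finset.sum_congr rfl fun p _ => ?_
    simp only [Fin.consEquiv_apply, Fin.prod_univ_succ, Fin.cons_zero, ← Fin.succ_castSucc,
      Fin.cons_succ, Fin.castSucc_zero, ← Fin.succ_last, vecMul, dotProduct,
      Finset.sum_mul]
    refine Finset.sum_congr rfl fun l _ => ?_
    ring

theorem sum_fin_path_mul_prod_eq_sum_pow {P M : Matrix ι ι R} {d : ι → R}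
    (hP : ∀ l, ∑ l', P l l' = 1) (hM : ∀ l l', M l l' = P l l' * d l) (v : ι → R) (m : ℕ) :
    ∑ p : Fin (m + 1) → ι, v (p 0) * (∏ j : Fin m, P (p j.castSucc) (p j.succ)) * ∏ j, d (p j)
      = ∑ l, ∑ l', v l * (M ^ (m + 1)) l l' := by
  have hd : d = M *ᵥ 1 := funext fun l => by
    simp [mulVec, dotProduct, hM, ← Finset.sum_mul, hP]
  have hrhs : ∑ l, ∑ l', v l * (M ^ (m + 1)) l l' = v ⬝ᵥ (M ^ m *ᵥ d) := by
    rw [hd, mulVec_mulVec, ← pow_succ]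
    simp [dotProduct, mulVec, Finset.mul_sum]
  rw [hrhs, ← sum_fin_path_eq_dotProduct_pow_mulVec]
  refine Finset.sum_congr rfl fun p _ => ?_
  simp only [hM, Finset.prod_mul_distrib, Fin.prod_univ_castSucc (fun j => d (p j))]
  ring

end Matrix

namespace MeasureTheory

theorem Measure.eq_smul_pi_of_forall_pi_univ {ι : Type*} [Fintype ι] {α : ι → Type*}
    [∀ i, MeasurableSpace (α i)] {ρ : ∀ i, Measure (α i)} [∀ i, IsFiniteMeasure (ρ i)]
    {ν : Measure (∀ i, α i)} {c : ℝ≥0∞} (hc : c ≠ ∞)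
    (h : ∀ s : ∀ i, Set (α i), (∀ i, MeasurableSet (s i)) →
      ν (Set.univ.pi s) = c * ∏ i, ρ i (s i)) :
    ν = c • Measure.pi ρ := by
  have hbox : ∀ s : ∀ i, Set (α i), (∀ i, MeasurableSet (s i)) →
      ν (Set.univ.pi s) = (c • Measure.pi ρ) (Set.univ.pi s) := fun s hs => by simp [h s hs]
  have h_univ : ν Set.univ = (c • Measure.pi ρ) Set.univ := by
    simpa using hbox (fun _ => Set.univ) fun _ => MeasurableSet.univ
  have : IsFiniteMeasure ν := ⟨by simp [h_univ, ENNReal.mul_lt_top hc.lt_top]⟩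
  refine ext_of_generate_finite _ generateFrom_pi.symm isPiSystem_pi ?_ h_univ
  rintro _ ⟨s, hs, rfl⟩
  exact hbox s fun i => hs i trivial

theorem lintegral_pi_prod_eq_prod_lintegral {ι : Type*} [Fintype ι] {α : ι → Type*}
    [∀ i, MeasurableSpace (α i)] {ρ : ∀ i, Measure (α i)} [∀ i, IsProbabilityMeasure (ρ i)]
    {f : ∀ i, α i → ℝ≥0∞} (hf : ∀ i, Measurable (f i)) :
    ∫⁻ x, ∏ i, f i (x i) ∂Measure.pi ρ = ∏ i, ∫⁻ x, f i x ∂ρ i := by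
  refine (lintegral_prod_eq_prod_lintegral_of_indepFun Finset.univ
    (fun i (x : ∀ i, α i) => f i (x i)) (iIndepFun_pi fun i => (hf i).aemeasurable)
    fun i => (hf i).comp (measurable_pi_apply i)).trans ?_
  exact Finset.prod_congr rfl fun i _ => (measurePreserving_eval ρ i).lintegral_comp (hf i)

theorem lintegral_eq_sum_setLIntegral_preimage_singleton {Ω α : Type*} [MeasurableSpace Ω]
    [MeasurableSpace α] [Fintype α] [MeasurableSingletonClass α] {μ : Measure Ω} {X : Ω → α}
    (hX : Measurable X) (f : Ω → ℝ≥0∞) :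
    ∫⁻ ω, f ω ∂μ = ∑ a, ∫⁻ ω in X ⁻¹' {a}, f ω ∂μ := by
  rw [← tsum_fintype (L := .unconditional _),
    ← lintegral_iUnion (fun a => hX (measurableSet_singleton a)) (pairwise_disjoint_fiber X),
    ← Set.preimage_iUnion, Set.iUnion_of_singleton, Set.preimage_univ, Measure.restrict_univ]

end MeasureTheory

namespace ProbabilityTheory

theorem lintegral_ofReal_exp_mul_expMeasure {q c : ℝ} (hq : 0 < q) (hc : c < q) :
    ∫⁻ x, ENNReal.ofReal (Real.exp (c * x)) ∂expMeasure q = ENNReal.ofReal (q / (q - c)) := by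
  have hqc : 0 < q - c := sub_pos.2 hc
  have htilt : ∀ x, exponentialPDF q x * ENNReal.ofReal (Real.exp (c * x))
      = ENNReal.ofReal (q / (q - c)) * exponentialPDF (q - c) x := by
    intro x
    rcases le_or_gt 0 x with hx | hx
    · rw [exponentialPDF_of_nonneg hx, exponentialPDF_of_nonneg hx,
        ← ENNReal.ofReal_mul (by positivity), ← ENNReal.ofReal_mul (by positivity)]
      congr 1
      field_simp
      rw [← Real.exp_add]
      ring_nf
    · simp [exponentialPDF_of_neg hx]
  have hpdf : ∀ r, Measurable (exponentialPDF r) :=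
    fun r => (measurable_exponentialPDFReal r).ennreal_ofReal
  rw [show expMeasure q = volume.withDensity (exponentialPDF q) from rfl,
    lintegral_withDensity_eq_lintegral_mul _ (hpdf q) (by fun_prop)]
  simp_rw [Pi.mul_apply, htilt]
  rw [lintegral_const_mul _ (hpdf _), lintegral_exponentialPDF_eq_one hqc, mul_one]

end ProbabilityTheory

section MarkovModulated

variable {n m : ℕ} {Ω : Type*} [MeasurableSpace Ω] {μ : Measure Ω}
  {Z : ℕ → Ω → Fin n} {Y : ℕ → Ω → ℝ} {q : ℝ}

def pathPrefix {α : Type*} (X : ℕ → Ω → α) (m : ℕ) (ω : Ω) : Fin m → α := fun j => X j ω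

theorem measurable_pathPrefix {α : Type*} [MeasurableSpace α] {X : ℕ → Ω → α}
    (hX : ∀ j, Measurable (X j)) : Measurable (pathPrefix X m) :=
  measurable_pi_lambda _ fun j => hX j

theorem map_restrict_pathPrefix_eq_smul_pi {P : Matrix (Fin n) (Fin n) ℝ} {π₀ : Fin n → ℝ}
    (hY : ∀ j, Measurable (Y j))
    (hlaw : ∀ (i : Fin (m + 1) → Fin n) (A : Fin (m + 1) → Set ℝ), (∀ j, MeasurableSet (A j)) →
      μ {ω | ∀ j : Fin (m + 1), Z j ω = i j ∧ Y j ω ∈ A j} =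
        ENNReal.ofReal (π₀ (i 0)) * (∏ j : Fin m, ENNReal.ofReal (P (i j.castSucc) (i j.succ)))
          * ∏ j : Fin (m + 1), expMeasure q (A j))
    (hq : 0 < q) (i : Fin (m + 1) → Fin n) :
    (μ.restrict (pathPrefix Z (m + 1) ⁻¹' {i})).map (pathPrefix Y (m + 1)) =
      (ENNReal.ofReal (π₀ (i 0)) * ∏ j : Fin m, ENNReal.ofReal (P (i j.castSucc) (i j.succ)))
        • Measure.pi fun _ => expMeasure q := by
  have := isProbabilityMeasure_expMeasure hq
  have hYm : Measurable (pathPrefix Y (m + 1)) := measurable_pathPrefix hY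
  refine Measure.eq_smul_pi_of_forall_pi_univ (by simp [ENNReal.mul_eq_top, ENNReal.prod_ne_top])
    fun A hA => ?_
  rw [Measure.map_apply hYm (.univ_pi hA), Measure.restrict_apply (hYm (.univ_pi hA)),
    ← hlaw i A hA]
  congr 1
  ext ω
  simp [pathPrefix, forall_and, funext_iff, and_comm]

theorem setLIntegral_pathPrefix_exp_walk {r : Fin n → ℝ} {θ : ℝ} {c : ℝ≥0∞}
    (hZ : ∀ j, Measurable (Z j)) (hY : ∀ j, Measurable (Y j)) (hq : 0 < q)
    (hθ : ∀ l, 0 < q + θ * r l) {i : Fin (m + 1) → Fin n}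
    (hlaw : (μ.restrict (pathPrefix Z (m + 1) ⁻¹' {i})).map (pathPrefix Y (m + 1)) =
      c • Measure.pi fun _ => expMeasure q) :
    ∫⁻ ω in pathPrefix Z (m + 1) ⁻¹' {i},
        ENNReal.ofReal (Real.exp (θ * ∑ j ∈ Finset.range (m + 1), -r (Z j ω) * Y j ω)) ∂μ =
      c * ∏ j, ENNReal.ofReal (q / (q + θ * r (i j))) := by
  have := isProbabilityMeasure_expMeasure hq
  have hwalk : ∀ ω ∈ pathPrefix Z (m + 1) ⁻¹' {i},
      ENNReal.ofReal (Real.exp (θ * ∑ j ∈ Finset.range (m + 1), -r (Z j ω) * Y j ω))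
        = ∏ j, ENNReal.ofReal (Real.exp (-(θ * r (i j)) * pathPrefix Y (m + 1) ω j)) := by
    intro ω hω
    simp only [pathPrefix, Set.mem_preimage, Set.mem_singleton_iff, funext_iff] at hω
    simp only [pathPrefix, ← Fin.sum_univ_eq_sum_range (fun j => -r (Z j ω) * Y j ω),
      Finset.mul_sum, hω, Real.exp_sum,
      ENNReal.ofReal_prod_of_nonneg fun j _ => (Real.exp_pos _).le]
    congr! 3
    ring
  rw [setLIntegral_congr_fun (measurable_pathPrefix hZ (measurableSet_singleton i)) hwalk,
    ← lintegral_map (f := fun y => ∏ j, ENNReal.ofReal (Real.exp (-(θ * r (i j)) * y j)))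
      (by fun_prop) (measurable_pathPrefix hY),
    hlaw, lintegral_smul_measure,
    lintegral_pi_prod_eq_prod_lintegral
      (f := fun j y => ENNReal.ofReal (Real.exp (-(θ * r (i j)) * y))) fun j => by fun_prop,
    smul_eq_mul]
  congr 2 with j
  rw [lintegral_ofReal_exp_mul_expMeasure hq (by linarith [hθ (i j)])]
  ring_nf

end MarkovModulated

theorem mgf_markov_modulated_walk_general
    (n : ℕ)
    (P : Matrix (Fin n) (Fin n) ℝ)
    (hPnn : ∀ l m, 0 ≤ P l m) (hProw : ∀ l, ∑ m, P l m = 1)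
    (π₀ : Fin n → ℝ) (hπnn : ∀ l, 0 ≤ π₀ l)
    (r : Fin n → ℝ) (q : ℝ) (hq : 0 < q)
    (Ω : Type*) [MeasurableSpace Ω] (μ : Measure Ω)
    (Z : ℕ → Ω → Fin n) (Y : ℕ → Ω → ℝ)
    (hZ : ∀ j, Measurable (Z j)) (hY : ∀ j, Measurable (Y j))
    (hlaw : ∀ (k : ℕ) (i : Fin (k + 1) → Fin n) (A : Fin (k + 1) → Set ℝ),
      (∀ j, MeasurableSet (A j)) →
      μ {ω | ∀ j : Fin (k + 1), Z j ω = i j ∧ Y j ω ∈ A j} =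
        ENNReal.ofReal (π₀ (i 0))
          * (∏ j : Fin k, ENNReal.ofReal (P (i j.castSucc) (i j.succ)))
          * ∏ j : Fin (k + 1), expMeasure q (A j))
    (θ : ℝ) (hθ : ∀ l, 0 < q + θ * r l)
    (M : Matrix (Fin n) (Fin n) ℝ)
    (hM : ∀ l m, M l m = P l m * (q / (q + θ * r l)))
    (k : ℕ) (hk : 1 ≤ k) :
    ∫ ω, Real.exp (θ * ∑ j ∈ Finset.range k, (-(r (Z j ω))) * Y j ω) ∂μ =
      ∑ l, ∑ m, π₀ l * (M ^ k) l m := by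
  obtain ⟨k, rfl⟩ := Nat.exists_eq_add_of_le' hk
  have hd : ∀ l, 0 ≤ q / (q + θ * r l) := fun l => div_nonneg hq.le (hθ l).le
  have hr : Measurable r := measurable_of_finite r
  rw [integral_eq_lintegral_of_nonneg_ae (ae_of_all _ fun ω => (Real.exp_pos _).le)
      (by fun_prop),
    lintegral_eq_sum_setLIntegral_preimage_singleton (measurable_pathPrefix hZ),
    Finset.sum_congr rfl fun i _ => setLIntegral_pathPrefix_exp_walk hZ hY hq hθ
      (map_restrict_pathPrefix_eq_smul_pi hY (hlaw k) hq i),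
    ← Matrix.sum_fin_path_mul_prod_eq_sum_pow hProw hM, ENNReal.toReal_sum fun _ _ => by simp [ENNReal.mul_eq_top, ENNReal.prod_ne_top]]
  simp [ENNReal.toReal_ofReal, hπnn, hPnn, hd]

/-- MGF of the Markov-modulated random walk `U_k = Σ_{j<k} (-r(Z_j)) Y_j`:
for `θ` with `q + θ r(l) > 0` for every state `l`,
`E[e^{θ U_k}] = π₀ᵀ M(θ)^k 𝟙` where `M(θ)_{l,m} = P_{l,m} q/(q + θ r(l))`. -/
theorem mgf_markov_modulated_walk
    (n : ℕ) (hn : 1 ≤ n)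
    (P : Matrix (Fin n) (Fin n) ℝ)
    (hPnn : ∀ l m, 0 ≤ P l m) (hProw : ∀ l, ∑ m, P l m = 1)
    (π₀ : Fin n → ℝ) (hπnn : ∀ l, 0 ≤ π₀ l) (hπsum : ∑ l, π₀ l = 1)
    (r : Fin n → ℝ) (q : ℝ) (hq : 0 < q)
    (Ω : Type*) [MeasurableSpace Ω] (μ : Measure Ω) [IsProbabilityMeasure μ]
    (Z : ℕ → Ω → Fin n) (Y : ℕ → Ω → ℝ)
    (hZ : ∀ j, Measurable (Z j)) (hY : ∀ j, Measurable (Y j))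
    (hlaw : ∀ (k : ℕ) (i : Fin (k + 1) → Fin n) (A : Fin (k + 1) → Set ℝ),
      (∀ j, MeasurableSet (A j)) →
      μ {ω | ∀ j : Fin (k + 1), Z j ω = i j ∧ Y j ω ∈ A j} =
        ENNReal.ofReal (π₀ (i 0))
          * (∏ j : Fin k, ENNReal.ofReal (P (i j.castSucc) (i j.succ)))
          * ∏ j : Fin (k + 1), expMeasure q (A j))
    (θ : ℝ) (hθ : ∀ l, 0 < q + θ * r l)
    (M : Matrix (Fin n) (Fin n) ℝ)
    (hM : ∀ l m, M l m = P l m * (q / (q + θ * r l)))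
    (k : ℕ) (hk : 1 ≤ k) :
    ∫ ω, Real.exp (θ * ∑ j ∈ Finset.range k, (-(r (Z j ω))) * Y j ω) ∂μ =
      ∑ l, ∑ m, π₀ l * (M ^ k) l m :=
  mgf_markov_modulated_walk_general n P hPnn hProw π₀ hπnn r q hq Ω μ Z Y hZ hY hlaw θ hθ M hM k hk
end

section
/- Let M be an n×n real matrix with nonnegative entries, and let u, v ∈ ℝⁿ have strictly positive entries. Then lim_{k→∞} (uᵀ M^k v)^{1/k} exists and equals the spectral radius ρ(M) of M. -/
/-- The spectral radius of a real square matrix: the maximum modulus of its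
complex eigenvalues. -/
noncomputable def Matrix.specRad {n : ℕ} (M : Matrix (Fin n) (Fin n) ℝ) : ℝ :=
  (spectralRadius ℂ (M.map (Complex.ofReal : ℝ → ℂ))).toReal

open scoped Matrix

/-!
For an entrywise nonnegative matrix `B` and strictly positive `u`, `v`, the bilinear form
`uᵀ B v` is bounded above and below by constant multiples of the `ℓ∞`-operator norm `‖B‖`
(the maximal absolute row sum). Applied to `B = M ^ k`, the constants disappear under the `k`-th
root, so `(uᵀ M^k v)^(1/k)` has the same limit as `‖M^k‖^(1/k)`, which is the spectral radius by
Gelfand's formula for the complexification of `M`.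
-/

open Filter Topology

theorem spectrum.tendsto_norm_pow_rpow_one_div_toReal_spectralRadius {A : Type*} [NormedRing A]
    [NormedAlgebra ℂ A] [CompleteSpace A] (a : A) :
    Tendsto (fun k : ℕ => ‖a ^ k‖ ^ (1 / k : ℝ)) atTop (𝓝 (spectralRadius ℂ a).toReal) := by
  -- No `NormOneClass` is assumed: for matrices over `Fin 0` we have `‖1‖ = 0`.
  have hfin : spectralRadius ℂ a ≠ ⊤ := ne_top_of_le_ne_top (by simp [ENNReal.mul_eq_top])
    (spectrum.spectralRadius_le_pow_nnnorm_pow_one_div ℂ a 0)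
  refine ((ENNReal.tendsto_toReal hfin).comp
    (spectrum.pow_norm_pow_one_div_tendsto_nhds_spectralRadius a)).congr fun k => ?_
  exact ENNReal.toReal_ofReal (by positivity)

theorem Finite.exists_pos_forall_le {ι : Type*} [Finite ι] {u : ι → ℝ} (hu : ∀ i, 0 < u i) :
    ∃ a > 0, ∀ i, a ≤ u i :=
  ((eventually_nhdsWithin_of_forall fun _ ha => ha).and <| eventually_all.2 fun i =>
    (eventually_le_nhds (hu i)).filter_mono (nhdsWithin_le_nhds (s := Set.Ioi 0))).exists

theorem tendsto_rpow_of_mul_le_of_le_mul {α : Type*} {l : Filter α} {f g p : α → ℝ} {c C L : ℝ}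
    (hc : 0 < c) (hC : 0 < C) (hg : ∀ x, 0 ≤ g x) (hp : ∀ x, 0 ≤ p x)
    (hlow : ∀ x, c * g x ≤ f x) (hup : ∀ x, f x ≤ C * g x)
    (hp0 : Tendsto p l (𝓝 0)) (h : Tendsto (fun x => g x ^ p x) l (𝓝 L)) :
    Tendsto (fun x => f x ^ p x) l (𝓝 L) := by
  have hroot : ∀ {b : ℝ}, 0 < b → Tendsto (fun x => b ^ p x) l (𝓝 1) := fun hb => by
    simpa using tendsto_const_nhds.rpow hp0 (Or.inl hb.ne')
  refine tendsto_of_tendsto_of_tendsto_of_le_of_le (by simpa using (hroot hc).mul h)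
    (by simpa using (hroot hC).mul h) (fun x => ?_) (fun x => ?_)
  · rw [← Real.mul_rpow hc.le (hg x)]
    exact Real.rpow_le_rpow (mul_nonneg hc.le (hg x)) (hlow x) (hp x)
  · rw [← Real.mul_rpow hC.le (hg x)]
    exact Real.rpow_le_rpow ((mul_nonneg hc.le (hg x)).trans (hlow x)) (hup x) (hp x)

attribute [local instance] Matrix.linftyOpSeminormedAddCommGroup
  Matrix.linftyOpNormedRing Matrix.linftyOpNormedAlgebra

namespace Matrix

section

variable {m n : Type*} [Fintype m] [Fintype n]

theorem linfty_opNorm_le_sum_norm {α : Type*} [SeminormedAddCommGroup α] (B : Matrix m n α) :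
    ‖B‖ ≤ ∑ i, ∑ j, ‖B i j‖ := by
  have h : (Finset.univ.sup fun i => ∑ j, ‖B i j‖₊) ≤ ∑ i, ∑ j, ‖B i j‖₊ :=
    Finset.sup_le fun i _ =>
      Finset.single_le_sum (f := fun i => ∑ j, ‖B i j‖₊) (fun i _ => zero_le) (Finset.mem_univ i)
  rw [linfty_opNorm_def]
  exact (NNReal.coe_le_coe.2 h).trans_eq (by simp)

theorem exists_pos_mul_linfty_opNorm_le_dotProduct_mulVec {u : m → ℝ} {v : n → ℝ}
    (hu : ∀ i, 0 < u i) (hv : ∀ j, 0 < v j) :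
    ∃ c > 0, ∀ B : Matrix m n ℝ, (∀ i j, 0 ≤ B i j) → c * ‖B‖ ≤ u ⬝ᵥ B *ᵥ v := by
  obtain ⟨a, ha, hau⟩ := Finite.exists_pos_forall_le hu
  obtain ⟨b, hb, hbv⟩ := Finite.exists_pos_forall_le hv
  refine ⟨a * b, mul_pos ha hb, fun B hB => ?_⟩
  calc a * b * ‖B‖ ≤ a * b * ∑ i, ∑ j, B i j := by
        gcongr
        simpa [abs_of_nonneg (hB _ _)] using linfty_opNorm_le_sum_norm B
    _ ≤ ∑ i, ∑ j, u i * (B i j * v j) := by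
        simp_rw [Finset.mul_sum]
        refine Finset.sum_le_sum fun i _ => Finset.sum_le_sum fun j _ => ?_
        calc a * b * B i j = a * (B i j * b) := by ring
          _ ≤ u i * (B i j * v j) := mul_le_mul (hau i)
            (mul_le_mul_of_nonneg_left (hbv j) (hB i j)) (mul_nonneg (hB i j) hb.le) (hu i).le
    _ = u ⬝ᵥ B *ᵥ v := by simp [dotProduct, mulVec, Finset.mul_sum]

theorem exists_pos_dotProduct_mulVec_le_mul_linfty_opNorm (u : m → ℝ) (v : n → ℝ) :
    ∃ C > 0, ∀ B : Matrix m n ℝ, u ⬝ᵥ B *ᵥ v ≤ C * ‖B‖ := by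
  refine ⟨(∑ i, |u i|) * ‖v‖ + 1, by positivity, fun B => ?_⟩
  calc u ⬝ᵥ B *ᵥ v ≤ ∑ i, |u i| * ‖B *ᵥ v‖ := by
        refine Finset.sum_le_sum fun i _ => (le_abs_self _).trans ?_
        rw [abs_mul]
        gcongr
        exact (Real.norm_eq_abs _).symm.trans_le (norm_le_pi_norm _ i)
    _ ≤ ∑ i, |u i| * (‖B‖ * ‖v‖) := by
        gcongr
        exact linfty_opNorm_mulVec B v
    _ = (∑ i, |u i|) * ‖v‖ * ‖B‖ := by rw [← Finset.sum_mul]; ring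
    _ ≤ ((∑ i, |u i|) * ‖v‖ + 1) * ‖B‖ := by gcongr; linarith

theorem linfty_opNorm_map_ofReal (B : Matrix m n ℝ) :
    ‖B.map (Complex.ofReal : ℝ → ℂ)‖ = ‖B‖ := by
  simp [linfty_opNorm_def]

end

theorem tendsto_linfty_opNorm_pow_rpow_one_div_specRad {n : ℕ} (M : Matrix (Fin n) (Fin n) ℝ) :
    Tendsto (fun k : ℕ => ‖M ^ k‖ ^ (1 / k : ℝ)) atTop (𝓝 M.specRad) := by
  refine (spectrum.tendsto_norm_pow_rpow_one_div_toReal_spectralRadius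
    (M.map Complex.ofReal)).congr fun k => ?_
  rw [← linfty_opNorm_map_ofReal (M ^ k)]
  congr 2
  exact (M.map_pow Complex.ofRealHom k).symm

end Matrix

theorem bilinear_form_growth_spectral_radius_general
    (n : ℕ) (M : Matrix (Fin n) (Fin n) ℝ)
    (hMnn : ∀ i j, 0 ≤ M i j)
    (u v : Fin n → ℝ) (hu : ∀ i, 0 < u i) (hv : ∀ i, 0 < v i) :
    Filter.Tendsto (fun k : ℕ => (u ⬝ᵥ ((M ^ k) *ᵥ v)) ^ ((1 : ℝ) / k))
      Filter.atTop (nhds M.specRad) := by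
  obtain ⟨c, hc, hlow⟩ := Matrix.exists_pos_mul_linfty_opNorm_le_dotProduct_mulVec hu hv
  obtain ⟨C, hC, hup⟩ := Matrix.exists_pos_dotProduct_mulVec_le_mul_linfty_opNorm u v
  exact tendsto_rpow_of_mul_le_of_le_mul hc hC (fun _ => norm_nonneg _) (fun _ => by positivity)
    (fun k => hlow _ (Matrix.pow_apply_nonneg hMnn k)) (fun _ => hup _)
    tendsto_one_div_atTop_nhds_zero_nat (Matrix.tendsto_linfty_opNorm_pow_rpow_one_div_specRad M)

/-- Perron–Frobenius-type asymptotics (Dembo–Zeitouni, Theorem 3.1.1): for a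
nonnegative matrix `M` and strictly positive vectors `u`, `v`, the `k`-th root
of the bilinear form `uᵀ M^k v` converges to the spectral radius of `M`. -/
theorem bilinear_form_growth_spectral_radius
    (n : ℕ) (hn : 1 ≤ n) (M : Matrix (Fin n) (Fin n) ℝ)
    (hMnn : ∀ i j, 0 ≤ M i j)
    (u v : Fin n → ℝ) (hu : ∀ i, 0 < u i) (hv : ∀ i, 0 < v i) :
    Filter.Tendsto (fun k : ℕ => (u ⬝ᵥ ((M ^ k) *ᵥ v)) ^ ((1 : ℝ) / k))
      Filter.atTop (nhds M.specRad) :=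
  bilinear_form_growth_spectral_radius_general n M hMnn u v hu hv
end

section
/- Let M be an n×n real matrix with nonnegative entries, and define the symmetric nonnegative matrix G by G_{ij} = √(M_{ij}·M_{ji}) for all i, j. Then the spectral radius of G is at most the spectral radius of M: ρ(G) ≤ ρ(M). -/
open ENNReal
open scoped Matrix.Norms.Frobenius

namespace spectrum

variable {𝕜 A B : Type*}

theorem spectralRadius_lt_top [NormedField 𝕜] [NormedRing A] [NormedAlgebra 𝕜 A]
    [CompleteSpace A] (a : A) : spectralRadius 𝕜 a < ⊤ :=
  (iSup₂_le fun _ hk => (by exact_mod_cast norm_le_norm_mul_of_mem hk :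
    (‖_‖₊ : ℝ≥0∞) ≤ ↑(‖a‖₊ * ‖(1 : A)‖₊))).trans_lt coe_lt_top

theorem spectralRadius_le_of_forall_nnnorm_pow_le [NormedRing A] [NormedAlgebra ℂ A]
    [CompleteSpace A] [NormedRing B] [NormedAlgebra ℂ B] [CompleteSpace B] {a : A} {b : B}
    (h : ∀ k : ℕ, ‖b ^ k‖₊ ≤ ‖a ^ k‖₊) : spectralRadius ℂ b ≤ spectralRadius ℂ a :=
  le_of_tendsto_of_tendsto' (pow_nnnorm_pow_one_div_tendsto_nhds_spectralRadius b)
    (pow_nnnorm_pow_one_div_tendsto_nhds_spectralRadius a) fun k =>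
      rpow_le_rpow (coe_le_coe.2 (h k)) (by positivity)

end spectrum

namespace Matrix

variable {l m n : Type*}

noncomputable def geomMean (A B : Matrix m n ℝ) : Matrix m n ℝ := of fun i j => √(A i j * B i j)

@[simp]
theorem geomMean_apply (A B : Matrix m n ℝ) (i : m) (j : n) :
    geomMean A B i j = √(A i j * B i j) := rfl

theorem geomMean_nonneg (A B : Matrix m n ℝ) (i : m) (j : n) : 0 ≤ geomMean A B i j :=
  Real.sqrt_nonneg _

theorem geomMean_mul_geomMean_apply_le [Fintype m] {A C : Matrix l m ℝ} {B D : Matrix m n ℝ}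
    (hA : ∀ i j, 0 ≤ A i j) (hB : ∀ i j, 0 ≤ B i j) (hC : ∀ i j, 0 ≤ C i j)
    (hD : ∀ i j, 0 ≤ D i j) (i : l) (j : n) :
    (geomMean A C * geomMean B D) i j ≤ geomMean (A * B) (C * D) i j := by
  have hAB : ∀ k, 0 ≤ A i k * B k j := fun k => mul_nonneg (hA i k) (hB k j)
  have hCD : ∀ k, 0 ≤ C i k * D k j := fun k => mul_nonneg (hC i k) (hD k j)
  calc (geomMean A C * geomMean B D) i j
      = ∑ k, √(A i k * B k j) * √(C i k * D k j) := by
        simp only [mul_apply, geomMean_apply]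
        refine Finset.sum_congr rfl fun k _ => ?_
        rw [← Real.sqrt_mul (mul_nonneg (hA i k) (hC i k)),
          ← Real.sqrt_mul (hAB k)]
        ring_nf
    _ ≤ √(∑ k, A i k * B k j) * √(∑ k, C i k * D k j) :=
        Real.sum_sqrt_mul_sqrt_le _ hAB hCD
    _ = geomMean (A * B) (C * D) i j := by
        rw [geomMean_apply, mul_apply, mul_apply,
          Real.sqrt_mul (Finset.sum_nonneg fun k _ => hAB k)]

theorem geomMean_pow_apply_le [Fintype m] [DecidableEq m] {A B : Matrix m m ℝ}
    (hA : ∀ i j, 0 ≤ A i j) (hB : ∀ i j, 0 ≤ B i j) (k : ℕ) (i j : m) :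
    (geomMean A B ^ k) i j ≤ geomMean (A ^ k) (B ^ k) i j := by
  induction k generalizing j with
  | zero => rw [pow_zero, pow_zero, pow_zero, geomMean_apply, one_apply]; split_ifs <;> simp
  | succ k ih =>
    calc (geomMean A B ^ (k + 1)) i j
        ≤ (geomMean (A ^ k) (B ^ k) * geomMean A B) i j := by
          rw [pow_succ, mul_apply, mul_apply]
          exact Finset.sum_le_sum fun l _ =>
            mul_le_mul_of_nonneg_right (ih l) (geomMean_nonneg A B l j)
      _ ≤ geomMean (A ^ (k + 1)) (B ^ (k + 1)) i j := by
          rw [pow_succ, pow_succ]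
          exact geomMean_mul_geomMean_apply_le (pow_apply_nonneg hA k) hA
            (pow_apply_nonneg hB k) hB i j

variable [Fintype m] [Fintype n]

theorem frobenius_norm_sq (A : Matrix m n ℝ) : ‖A‖ ^ 2 = ∑ i, ∑ j, A i j ^ 2 := by
  rw [frobenius_norm_def, ← Real.rpow_natCast, ← Real.rpow_mul (by positivity)]
  norm_num

theorem frobenius_norm_le_of_apply_le {A B : Matrix m n ℝ} (hA : ∀ i j, 0 ≤ A i j)
    (h : ∀ i j, A i j ≤ B i j) : ‖A‖ ≤ ‖B‖ := by
  refine le_of_sq_le_sq ?_ (norm_nonneg B)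
  rw [frobenius_norm_sq, frobenius_norm_sq]
  gcongr with i _ j _
  exacts [hA i j, h i j]

theorem frobenius_norm_geomMean_le {A B : Matrix m n ℝ} (hA : ∀ i j, 0 ≤ A i j)
    (hB : ∀ i j, 0 ≤ B i j) : ‖geomMean A B‖ ≤ √(‖A‖ * ‖B‖) := by
  refine Real.le_sqrt_of_sq_le ?_
  calc ‖geomMean A B‖ ^ 2 = ∑ p : m × n, A p.1 p.2 * B p.1 p.2 := by
        rw [frobenius_norm_sq, Fintype.sum_prod_type' (f := fun i j => A i j * B i j)]
        simp only [geomMean_apply, Real.sq_sqrt (mul_nonneg (hA _ _) (hB _ _))]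
    _ ≤ √(∑ p : m × n, A p.1 p.2 ^ 2) * √(∑ p : m × n, B p.1 p.2 ^ 2) :=
        Real.sum_mul_le_sqrt_mul_sqrt _ _ _
    _ = ‖A‖ * ‖B‖ := by
        rw [Fintype.sum_prod_type' (f := fun i j => A i j ^ 2),
          Fintype.sum_prod_type' (f := fun i j => B i j ^ 2), ← frobenius_norm_sq,
          ← frobenius_norm_sq, Real.sqrt_sq (norm_nonneg A), Real.sqrt_sq (norm_nonneg B)]

theorem frobenius_norm_geomMean_transpose_le {A : Matrix m m ℝ} (hA : ∀ i j, 0 ≤ A i j) :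
    ‖geomMean A Aᵀ‖ ≤ ‖A‖ := by
  have h := frobenius_norm_geomMean_le (B := Aᵀ) hA fun i j => hA j i
  rwa [frobenius_norm_transpose, Real.sqrt_mul_self (norm_nonneg A)] at h

end Matrix

open Matrix

/-- Schwenk's inequality: for a nonnegative matrix `M`, the symmetric matrix
`G` of entrywise geometric means `G_{ij} = √(M_{ij} M_{ji})` has spectral
radius at most that of `M`. -/
theorem specRad_geometric_mean_le
    (n : ℕ) (M G : Matrix (Fin n) (Fin n) ℝ)
    (hMnn : ∀ i j, 0 ≤ M i j)
    (hG : ∀ i j, G i j = Real.sqrt (M i j * M j i)) :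
    G.specRad ≤ M.specRad := by
  have hGM : G = geomMean M Mᵀ := ext hG
  have hpow (A : Matrix (Fin n) (Fin n) ℝ) (k : ℕ) :
      ‖(A.map Complex.ofReal) ^ k‖₊ = ‖A ^ k‖₊ :=
    (congrArg _ (A.map_pow Complex.ofRealHom k)).symm.trans
      (frobenius_nnnorm_map_eq _ _ Complex.nnnorm_real)
  refine toReal_mono (spectrum.spectralRadius_lt_top _).ne
    (spectrum.spectralRadius_le_of_forall_nnnorm_pow_le fun k => ?_)
  rw [hpow, hpow, ← NNReal.coe_le_coe, coe_nnnorm, coe_nnnorm]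
  calc ‖G ^ k‖ ≤ ‖geomMean (M ^ k) (M ^ k)ᵀ‖ := by
        refine frobenius_norm_le_of_apply_le (pow_apply_nonneg ?_ k) ?_
        · exact hGM ▸ geomMean_nonneg M Mᵀ
        · rw [transpose_pow, hGM]
          exact geomMean_pow_apply_le hMnn (fun i j => hMnn j i) k
    _ ≤ ‖M ^ k‖ := frobenius_norm_geomMean_transpose_le (pow_apply_nonneg hMnn k)
end

section
/- Fix n ≥ 1, a row-stochastic matrix P ∈ ℝ^{n×n} with strictly positive diagonal entries (P_{ll} > 0 for all l), rates r : {1,…,n} → ℝ with r̲ := min_l r(l) < 0 < max_l r(l) =: r̄, and q > 0. For θ in the open interval I = (-q/r̄, -q/r̲) (on which q + θ r(l) > 0 for all l), define M(θ) by M(θ)_{l,m} = P_{l,m}·q/(q + θ r(l)). Then ρ(M(θ)) → ∞ as θ ↑ -q/r̲ and ρ(M(θ)) → ∞ as θ ↓ -q/r̄. -/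
/-!
The trace of a real matrix is the sum of its `n` complex eigenvalues, so `n ρ(A) ≥ |tr A|`.
On `I` every diagonal entry `P_{ll} q / (q + θ r(l))` of `M(θ)` is positive, hence
`ρ(M(θ)) ≥ P_{ll} q / (n (q + θ r(l)))` for each state `l`. At the endpoint `-q/r̲` (resp. `-q/r̄`)
the denominator vanishes for a state with `r(l) = r̲` (resp. `r̄`), so this bound tends to `∞`.
-/

open Filter Topology
open scoped ENNReal

theorem spectralRadius_ne_top_of_finite {𝕜 A : Type*} [NormedField 𝕜] [Ring A] [Algebra 𝕜 A]
    {a : A} (h : (spectrum 𝕜 a).Finite) : spectralRadius 𝕜 a ≠ ⊤ :=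
  ne_top_of_le_ne_top ENNReal.coe_ne_top <| iSup₂_le fun _ hk ↦
    ENNReal.coe_le_coe.2 <| Finset.le_sup (f := nnnorm) (h.mem_toFinset.2 hk)

namespace Matrix

variable {n : ℕ}

theorem norm_le_specRad {A : Matrix (Fin n) (Fin n) ℝ} {μ : ℂ}
    (hμ : μ ∈ spectrum ℂ (A.map (Complex.ofReal : ℝ → ℂ))) : ‖μ‖ ≤ A.specRad :=
  ENNReal.toReal_mono (spectralRadius_ne_top_of_finite (finite_spectrum _))
    (le_iSup₂ (f := fun k (_ : k ∈ spectrum ℂ _) ↦ (‖k‖₊ : ℝ≥0∞)) μ hμ)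

theorem abs_trace_le_mul_specRad (A : Matrix (Fin n) (Fin n) ℝ) :
    |A.trace| ≤ n * A.specRad := by
  set B := A.map (Complex.ofReal : ℝ → ℂ)
  have hcard : B.charpoly.roots.card = n := by
    rw [Polynomial.splits_iff_card_roots.mp (IsAlgClosed.splits _), charpoly_natDegree_eq_dim,
      Fintype.card_fin]
  calc |A.trace| = ‖B.charpoly.roots.sum‖ := by
        rw [← trace_eq_sum_roots_charpoly]
        simp [B, trace, ← Complex.ofReal_sum]
    _ ≤ (B.charpoly.roots.map norm).sum := norm_multiset_sum_le _
    _ ≤ (B.charpoly.roots.map norm).card • A.specRad := by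
        refine Multiset.sum_le_card_nsmul _ _ fun x hx ↦ ?_
        obtain ⟨μ, hμ, rfl⟩ := Multiset.mem_map.mp hx
        exact norm_le_specRad (mem_spectrum_of_isRoot_charpoly (Polynomial.isRoot_of_mem_roots hμ))
    _ = n * A.specRad := by rw [Multiset.card_map, hcard, nsmul_eq_mul]

theorem diag_le_trace {ι R : Type*} [Fintype ι] [AddCommMonoid R] [PartialOrder R]
    [IsOrderedAddMonoid R] {A : Matrix ι ι R} (hA : ∀ i, 0 ≤ A i i) (i : ι) : A i i ≤ A.trace :=
  Finset.single_le_sum (fun j _ ↦ hA j) (Finset.mem_univ i)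

theorem tendsto_specRad_atTop {α : Type*} {L : Filter α} {M : α → Matrix (Fin n) (Fin n) ℝ}
    (i : Fin n) (hdiag : ∀ᶠ x in L, ∀ j, 0 ≤ M x j j) (hi : Tendsto (fun x ↦ M x i i) L atTop) :
    Tendsto (fun x ↦ (M x).specRad) L atTop := by
  have hn : (0 : ℝ) < n := by exact_mod_cast i.pos
  refine tendsto_atTop_mono' L ?_ (hi.atTop_div_const hn)
  filter_upwards [hdiag] with x hx
  rw [div_le_iff₀' hn]
  calc M x i i ≤ (M x).trace := diag_le_trace hx i
    _ ≤ |(M x).trace| := le_abs_self _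
    _ ≤ n * (M x).specRad := abs_trace_le_mul_specRad _

end Matrix

theorem ContinuousAt.tendsto_const_div_atTop {X : Type*} [TopologicalSpace X] {f : X → ℝ}
    {x₀ : X} {s : Set X} {c : ℝ} (hf : ContinuousAt f x₀) (h0 : f x₀ = 0)
    (hpos : ∀ x ∈ s, 0 < f x) (hc : 0 < c) : Tendsto (fun x ↦ c / f x) (𝓝[s] x₀) atTop := by
  have hf' : Tendsto f (𝓝[s] x₀) (𝓝[>] 0) :=
    tendsto_nhdsWithin_of_tendsto_nhds_of_eventually_within _
      (h0 ▸ hf.tendsto.mono_left nhdsWithin_le_nhds) (eventually_nhdsWithin_of_forall hpos)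
  simpa only [div_eq_mul_inv, Pi.inv_apply] using hf'.inv_tendsto_nhdsGT_zero.const_mul_atTop hc

theorem add_mul_pos_of_mem_Ioo {q a b x θ : ℝ} (ha : a < 0) (hb : 0 < b) (hax : a ≤ x)
    (hxb : x ≤ b) (hθ : θ ∈ Set.Ioo (-q / b) (-q / a)) : 0 < q + θ * x := by
  obtain ⟨hθb, hθa⟩ := hθ
  rw [div_lt_iff₀ hb] at hθb
  rw [lt_div_iff_of_neg ha] at hθa
  rcases le_total 0 θ with h | h
  · nlinarith
  · nlinarith

theorem specRad_blowup_at_boundary_general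
    (n : ℕ)
    (P : Matrix (Fin n) (Fin n) ℝ)
    (hPdiag : ∀ l, 0 < P l l)
    (r : Fin n → ℝ) (q : ℝ) (hq : 0 < q)
    (rlo rhi : ℝ) (hlo : ∀ l, rlo ≤ r l) (hlo_mem : ∃ l, r l = rlo)
    (hhi : ∀ l, r l ≤ rhi) (hhi_mem : ∃ l, r l = rhi)
    (hrlo : rlo < 0) (hrhi : 0 < rhi)
    (M : ℝ → Matrix (Fin n) (Fin n) ℝ)
    (hM : ∀ θ l m, M θ l m = P l m * (q / (q + θ * r l))) :
    Filter.Tendsto (fun θ => (M θ).specRad)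
        (nhdsWithin (-q / rlo) (Set.Ioo (-q / rhi) (-q / rlo)))
        Filter.atTop ∧
      Filter.Tendsto (fun θ => (M θ).specRad)
        (nhdsWithin (-q / rhi) (Set.Ioo (-q / rhi) (-q / rlo)))
        Filter.atTop := by
  set I := Set.Ioo (-q / rhi) (-q / rlo)
  have hpos : ∀ θ ∈ I, ∀ l, 0 < q + θ * r l := fun θ hθ l ↦
    add_mul_pos_of_mem_Ioo hrlo hrhi (hlo l) (hhi l) hθ
  have blowup : ∀ l θ₀, q + θ₀ * r l = 0 → Tendsto (fun θ ↦ (M θ).specRad) (𝓝[I] θ₀) atTop := by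
    intro l θ₀ hθ₀
    refine Matrix.tendsto_specRad_atTop l (eventually_nhdsWithin_of_forall fun θ hθ j ↦ ?_) ?_
    · rw [hM]
      exact mul_nonneg (hPdiag j).le (div_nonneg hq.le (hpos θ hθ j).le)
    · simp_rw [hM, ← mul_div_assoc]
      exact (continuous_const.add (continuous_id.mul continuous_const)).continuousAt
        |>.tendsto_const_div_atTop hθ₀ (fun θ hθ ↦ hpos θ hθ l) (mul_pos (hPdiag l) hq)
  obtain ⟨l₀, rfl⟩ := hlo_mem
  obtain ⟨l₁, rfl⟩ := hhi_mem
  exact ⟨blowup l₀ _ (by rw [div_mul_cancel₀ _ hrlo.ne]; ring),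
    blowup l₁ _ (by rw [div_mul_cancel₀ _ hrhi.ne']; ring)⟩

/-- Steepness: for a row-stochastic `P` with positive diagonal and rates with
`r̲ < 0 < r̄`, the spectral radius of the tilted matrix
`M(θ)_{l,m} = P_{l,m} q/(q + θ r(l))` blows up at both endpoints of the
effective domain `(-q/r̄, -q/r̲)`. -/
theorem specRad_blowup_at_boundary
    (n : ℕ) (hn : 1 ≤ n)
    (P : Matrix (Fin n) (Fin n) ℝ)
    (hPnn : ∀ l m, 0 ≤ P l m) (hProw : ∀ l, ∑ m, P l m = 1)
    (hPdiag : ∀ l, 0 < P l l)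
    (r : Fin n → ℝ) (q : ℝ) (hq : 0 < q)
    (rlo rhi : ℝ) (hlo : ∀ l, rlo ≤ r l) (hlo_mem : ∃ l, r l = rlo)
    (hhi : ∀ l, r l ≤ rhi) (hhi_mem : ∃ l, r l = rhi)
    (hrlo : rlo < 0) (hrhi : 0 < rhi)
    (M : ℝ → Matrix (Fin n) (Fin n) ℝ)
    (hM : ∀ θ l m, M θ l m = P l m * (q / (q + θ * r l))) :
    Filter.Tendsto (fun θ => (M θ).specRad)
        (nhdsWithin (-q / rlo) (Set.Ioo (-q / rhi) (-q / rlo)))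
        Filter.atTop ∧
      Filter.Tendsto (fun θ => (M θ).specRad)
        (nhdsWithin (-q / rhi) (Set.Ioo (-q / rhi) (-q / rlo)))
        Filter.atTop :=
  specRad_blowup_at_boundary_general n P hPdiag r q hq rlo rhi hlo hlo_mem hhi hhi_mem hrlo hrhi M
    hM
end
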